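/- Let w ∈ S_n be an involution avoiding patterns 4231 and 3412, written in one-line notation as x_1 ... x_n. If x_1 = p with 1 < p < n, then x_p = 1 and x_i ≤ p for all 1 ≤ i ≤ p (so w stabilizes the set {1, ..., p}). -/

import Mathlib

/-- `w` is the block-reversal permutation (longest element of the Young subgroup)
associated to the composition `c`: within the block containing position `j`,
`w` maps `j` to its mirror image. -/
def IsBlockRev {n : ℕ} (c : Composition n) (w : Equiv.Perm (Fin n)) : Prop :=
  ∀ j : Fin n, (w j : ℕ) + (j : ℕ) + 1 =
    c.sizeUpTo (c.index j) + c.sizeUpTo ((c.index j : ℕ) + 1)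

/-- `w` avoids the pattern 4231. -/
def Avoids4231 {m : ℕ} (w : Equiv.Perm (Fin m)) : Prop :=
  ¬ ∃ i j k l : Fin m, i < j ∧ j < k ∧ k < l ∧ w l < w j ∧ w j < w k ∧ w k < w i

/-- `w` avoids the pattern 3412. -/
def Avoids3412 {m : ℕ} (w : Equiv.Perm (Fin m)) : Prop :=
  ¬ ∃ i j k l : Fin m, i < j ∧ j < k ∧ k < l ∧ w k < w l ∧ w l < w i ∧ w i < w j

/-- Number of inversions (Coxeter length) of a permutation. -/
def invNum {n : ℕ} (w : Equiv.Perm (Fin n)) : ℕ :=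
  (Finset.univ.filter (fun p : Fin n × Fin n => p.1 < p.2 ∧ w p.2 < w p.1)).card

/-- The Young subgroup associated to a composition `c`: permutations preserving
each consecutive block. -/
def YoungSubgroup {n : ℕ} (c : Composition n) : Subgroup (Equiv.Perm (Fin n)) where
  carrier := {w | ∀ j : Fin n, c.index (w j) = c.index j}
  one_mem' := by intro j; rfl
  mul_mem' := by
    intro a b ha hb j
    have h1 := ha (b j)
    have h2 := hb j
    simpa [Equiv.Perm.mul_apply] using h1.trans h2
  inv_mem' := by
    intro a ha j
    have h := ha (a⁻¹ j)
    rw [Equiv.Perm.inv_def, Equiv.apply_symm_apply] at h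
    exact h.symm

/-- The decreasing reordering of a list of naturals. -/
def sortDesc (l : List ℕ) : List ℕ := Multiset.sort (l : Multiset ℕ) (· ≥ ·)

/-- The conjugate of a partition given as a list: `conjList l j = #{i : l i ≥ j+1}`. -/
def conjList (l : List ℕ) : List ℕ :=
  (List.range (l.foldr max 0)).map (fun j => (l.filter (fun a => j + 1 ≤ a)).length)

/-- Schensted row insertion: insert `x` into a row, returning the new row and
the bumped entry (if any). -/
def insertRow (x : ℕ) : List ℕ → List ℕ × Option ℕ
  | [] => ([x], none)
  | y :: ys =>
    if x < y then (x :: ys, some y)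
    else
      let p := insertRow x ys
      (y :: p.1, p.2)

/-- Schensted insertion of `x` into a tableau, returning the new tableau and the
index of the row where a new cell was created. -/
def insertT (x : ℕ) : List (List ℕ) → List (List ℕ) × ℕ
  | [] => ([[x]], 0)
  | r :: rs =>
    match insertRow x r with
    | (r', none) => (r' :: rs, 0)
    | (r', some y) =>
      let p := insertT y rs
      (r' :: p.1, p.2 + 1)

/-- Add a cell labelled `lbl` at the end of row `i` of a tableau. -/
def addCell (lbl : ℕ) : ℕ → List (List ℕ) → List (List ℕ)
  | _, [] => [[lbl]]
  | 0, r :: rs => (r ++ [lbl]) :: rs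
  | i + 1, r :: rs => r :: addCell lbl i rs

/-- The Robinson–Schensted correspondence: maps a word to its pair
(insertion tableau `P`, recording tableau `Q`). -/
def RS (word : List ℕ) : List (List ℕ) × List (List ℕ) :=
  (word.zipIdx.map Prod.swap).foldl
    (fun pq ix =>
      let p := insertT ix.2 pq.1
      (p.1, addCell (ix.1 + 1) p.2 pq.2))
    ([], [])

/-- The one-line word (with values in `{1, …, n}`) of a permutation of `Fin n`. -/
def wordOf {n : ℕ} (w : Equiv.Perm (Fin n)) : List ℕ :=
  List.ofFn (fun i => (w i : ℕ) + 1)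

/-- The shape of a tableau: the list of its row lengths. -/
def shapeOf (t : List (List ℕ)) : List ℕ := t.map List.length

/-- `t` is a standard Young tableau with entries `1, …, n`. -/
def IsStandard (n : ℕ) (t : List (List ℕ)) : Prop :=
  (∀ r ∈ t, List.Pairwise (· < ·) r) ∧
  List.Pairwise (· ≥ ·) (shapeOf t) ∧
  (∀ r ∈ t, r ≠ []) ∧
  (∀ i k : ℕ, i + 1 < t.length → k < (t.getD (i + 1) []).length →
      (t.getD i []).getD k 0 < (t.getD (i + 1) []).getD k 0) ∧
  t.flatten.Perm (List.range' 1 n)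

/-- `t` is a reading tableau: every entry `p` is either in the first row, or
`p - 1` lies in the previous row. -/
def IsReading (t : List (List ℕ)) : Prop :=
  ∀ p ∈ t.flatten,
    t.findIdx (fun r => r.contains p) = 0 ∨
      (p - 1) ∈ t.getD (t.findIdx (fun r => r.contains p) - 1) []

/-- Length of the `j`-th column of the Young diagram of `l`. -/
def colLen (l : List ℕ) (j : ℕ) : ℕ := (l.filter (fun a => j < a)).length

/-- The column superstandard tableau of shape `l`: cells are numbered
consecutively within each column, columns taken from left to right. -/
def cssTableau (l : List ℕ) : List (List ℕ) :=
  (List.range l.length).map fun i =>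
    (List.range (l.getD i 0)).map fun j =>
      ((List.range j).map (colLen l)).sum + i + 1

/-! If `w a = p` and some position `i` with `a < i < p` had `w i > p`, then the positions
`a < i < p < w i` of the involution `w` would carry the values `p, w i, a, i`, a 3412 pattern. -/

theorem Equiv.Perm.apply_apply_of_mul_self_eq_one {α : Type*} {σ : Equiv.Perm α} (hσ : σ * σ = 1)
    (x : α) : σ (σ x) = x :=
  DFunLike.congr_fun hσ x

theorem Avoids3412.apply_lt_of_lt_of_lt {m : ℕ} {w : Equiv.Perm (Fin m)} (h : Avoids3412 w)
    (hw : w * w = 1) {a i : Fin m} (hai : a < i) (hia : i < w a) : w i < w a := by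
  by_contra! hle
  have hlt : w a < w i := lt_of_le_of_ne hle fun heq => hai.ne (w.injective heq)
  refine h ⟨a, i, w a, w i, hai, hia, hlt, ?_, ?_, hlt⟩ <;>
    simpa only [Equiv.Perm.apply_apply_of_mul_self_eq_one hw]

theorem involution_avoiding_stabilizes_general {n : ℕ} (hn : 0 < n)
    (w : Equiv.Perm (Fin n)) (hw : w * w = 1)
    (h2 : Avoids3412 w) :
    w (w ⟨0, hn⟩) = ⟨0, hn⟩ ∧
      ∀ i : Fin n, (i : ℕ) ≤ (w ⟨0, hn⟩ : ℕ) → (w i : ℕ) ≤ (w ⟨0, hn⟩ : ℕ) := by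
  set z : Fin n := ⟨0, hn⟩
  have hwz : w (w z) = z := Equiv.Perm.apply_apply_of_mul_self_eq_one hw z
  refine ⟨hwz, fun i hi => ?_⟩
  obtain rfl | hzi := eq_or_lt_of_le (show z ≤ i from Nat.zero_le _)
  · exact le_rfl
  obtain rfl | hiz := eq_or_lt_of_le (Fin.le_iff_val_le_val.mpr hi)
  · rw [hwz]
    exact Nat.zero_le _
  exact (h2.apply_lt_of_lt_of_lt hw hzi hiz).le

/-- If an involution avoiding 4231 and 3412 has `x₁ = p` with `1 < p < n`
(0-indexed: `0 < w 0 < n - 1`), then `x_p = 1` and `x_i ≤ p` for all `i ≤ p`. -/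
theorem involution_avoiding_stabilizes {n : ℕ} (hn : 0 < n)
    (w : Equiv.Perm (Fin n)) (hw : w * w = 1)
    (h1 : Avoids4231 w) (h2 : Avoids3412 w)
    (hp1 : 0 < (w ⟨0, hn⟩ : ℕ)) (hp2 : (w ⟨0, hn⟩ : ℕ) < n - 1) :
    w (w ⟨0, hn⟩) = ⟨0, hn⟩ ∧
      ∀ i : Fin n, (i : ℕ) ≤ (w ⟨0, hn⟩ : ℕ) → (w i : ℕ) ≤ (w ⟨0, hn⟩ : ℕ) :=
  involution_avoiding_stabilizes_general hn w hw h2
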